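/- arXiv:1808.06356 — 2 statements merged into one kernel-verified Lean document; each statement's English description precedes it below -/
import Mathlib

section
/- The conditional regret term is monotone with respect to enlarging the conditioning set (Proposition 1): let k ≥ 2 be an integer, let Z and Y be finite types, let n ≥ 1, and let z : Fin n → Z and y : Fin n → Y be data samples. Writing ⟨z, y⟩ : Fin n → Z × Y for the pairing i ↦ (z i, y i), it holds that Δ_k(z) ≤ Δ_k(⟨z, y⟩), i.e., ∑_{v ∈ Z} log R(k, |{i : z i = v}|) ≤ ∑_{(v, w) ∈ Z × Y} log R(k, |{i : z i = v ∧ y i = w}|). -/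
open Finset

/-- The multinomial NML regret `R(L, n)`: the sum over all count vectors
`(h_1, …, h_L)` with `h_1 + ⋯ + h_L = n` of the maximum likelihood
`(n! / (h_1! ⋯ h_L!)) · ∏_v (h_v / n)^{h_v}` (with the convention `0^0 = 1`). -/
noncomputable def regret (L n : ℕ) : ℝ :=
  ∑ h ∈ Finset.Nat.antidiagonalTuple L n,
    (Nat.multinomial Finset.univ h : ℝ) * ∏ v, ((h v : ℝ) / (n : ℝ)) ^ (h v)

/-- The conditional regret term `Δ_k(w) = ∑_{v ∈ W} log R(k, |{i : w i = v}|)`. -/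
noncomputable def condRegret (k : ℕ) {n : ℕ} {W : Type*} [Fintype W] [DecidableEq W]
    (w : Fin n → W) : ℝ :=
  ∑ v : W, Real.log (regret k (Finset.univ.filter (fun i => w i = v)).card)

section Aux

open MvPolynomial

variable {k : ℕ}

private noncomputable def G {k : ℕ} (h : Fin k → ℕ) : Fin k →₀ ℕ := Finsupp.equivFunOnFinite.symm h

private lemma G_apply (h : Fin k → ℕ) (i : Fin k) : G h i = h i := rfl

private lemma G_inj : Function.Injective (G (k := k)) :=
  Finsupp.equivFunOnFinite.symm.injective

private lemma G_add (a b : Fin k → ℕ) : G (a + b) = G a + G b := by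
  ext i; simp [G_apply]

private lemma sum_X_pow_expand (N : ℕ) :
    ((∑ i : Fin k, X i : MvPolynomial (Fin k) ℕ)) ^ N =
      ∑ d ∈ piAntidiag (univ : Finset (Fin k)) N,
        monomial (G d) (Nat.multinomial univ d) := by
  rw [Finset.sum_pow_eq_sum_piAntidiag]
  refine Finset.sum_congr rfl fun d _ => ?_
  have h1 : (∏ i : Fin k, (X i : MvPolynomial (Fin k) ℕ) ^ d i) = monomial (G d) 1 := by
    rw [← prod_X_pow_eq_monomial (s := G d)]
    refine (Finset.prod_subset (Finset.subset_univ _) fun i _ hi => ?_).symm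
    rw [Finsupp.notMem_support_iff] at hi
    rw [G_apply] at hi
    simp [G_apply, hi]
  rw [h1, ← map_natCast (C : ℕ →+* MvPolynomial (Fin k) ℕ), C_mul_monomial, mul_one,
    Nat.cast_id]

private lemma multinomial_vandermonde (n m : ℕ) (h : Fin k → ℕ)
    (hh : ∑ v, h v = n + m) :
    Nat.multinomial (univ : Finset (Fin k)) h =
      ∑ p ∈ (piAntidiag (univ : Finset (Fin k)) n ×ˢ piAntidiag (univ : Finset (Fin k)) m).filter
          (fun p => p.1 + p.2 = h),
        Nat.multinomial univ p.1 * Nat.multinomial univ p.2 := by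
  have key := congrArg (MvPolynomial.coeff (G h))
    (pow_add (∑ i : Fin k, (X i : MvPolynomial (Fin k) ℕ)) n m)
  rw [sum_X_pow_expand, sum_X_pow_expand, sum_X_pow_expand, Finset.sum_mul_sum,
    coeff_sum] at key
  simp only [coeff_sum, monomial_mul, coeff_monomial] at key
  have hL : ∑ d ∈ piAntidiag (univ : Finset (Fin k)) (n + m),
      (if G d = G h then Nat.multinomial univ d else 0) = Nat.multinomial univ h := by
    rw [Finset.sum_eq_single h]
    · simp
    · intro d _ hdh
      exact if_neg fun e => hdh (G_inj e)
    · intro hnot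
      exact absurd (by simp [mem_piAntidiag, hh]) hnot
  rw [hL] at key
  rw [key, Finset.sum_filter, Finset.sum_product]
  refine Finset.sum_congr rfl fun a _ => Finset.sum_congr rfl fun b _ => ?_
  rw [← G_add]
  by_cases hab : a + b = h
  · rw [if_pos (by rw [hab]), if_pos hab]
  · rw [if_neg (fun e => hab (G_inj e)), if_neg hab]

private lemma ml_ineq {N : ℕ} (c : Fin k → ℕ) (hc : ∑ v, c v = N)
    (θ : Fin k → ℝ) (hθ0 : ∀ v, 0 ≤ θ v) (hθ1 : ∑ v, θ v ≤ 1) :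
    ∏ v, θ v ^ c v ≤ ∏ v, ((c v : ℝ) / (N : ℝ)) ^ c v := by
  rcases Nat.eq_zero_or_pos N with hN | hN
  · subst hN
    have hzero : ∀ v ∈ (univ : Finset (Fin k)), c v = 0 := by
      rw [← Finset.sum_eq_zero_iff]; exact hc
    simp only [Finset.mem_univ, forall_true_left] at hzero
    simp [hzero]
  · have hN0 : (N : ℝ) ≠ 0 := Nat.cast_ne_zero.mpr hN.ne'
    set s : Finset (Fin k) := univ.filter (fun v => c v ≠ 0) with hs
    have hmem : ∀ v, v ∈ s ↔ c v ≠ 0 := by intro v; simp [hs]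
    have e1 : ∀ (f : Fin k → ℝ), ∏ v ∈ s, f v ^ c v = ∏ v, f v ^ c v := by
      intro f
      refine Finset.prod_subset (Finset.subset_univ _) fun v _ hv => ?_
      have : c v = 0 := by by_contra hcv; exact hv ((hmem v).mpr hcv)
      simp [this]
    set u : Fin k → ℝ := fun v => θ v * N / c v with hu
    set w : Fin k → ℝ := fun v => (c v : ℝ) / N with hw
    have hu0 : ∀ v, 0 ≤ u v := fun v => by
      apply div_nonneg (mul_nonneg (hθ0 v) (Nat.cast_nonneg _)) (Nat.cast_nonneg _)
    have hw' : ∑ v ∈ s, w v = 1 := by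
      rw [hw, ← Finset.sum_div]
      rw [show ∑ v ∈ s, (c v : ℝ) = ∑ v, (c v : ℝ) from
        Finset.sum_subset (Finset.subset_univ _) (fun v _ hv => by
          have : c v = 0 := by by_contra hcv; exact hv ((hmem v).mpr hcv)
          simp [this])]
      rw [← Nat.cast_sum, hc, div_self hN0]
    have hAM : ∏ v ∈ s, u v ^ w v ≤ 1 := by
      refine le_trans (Real.geom_mean_le_arith_mean_weighted s w u
        (fun v _ => div_nonneg (Nat.cast_nonneg _) (Nat.cast_nonneg _)) hw'
        (fun v hv => hu0 v)) ?_
      have : ∀ v ∈ s, w v * u v = θ v := by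
        intro v hv
        have hcv : (c v : ℝ) ≠ 0 := Nat.cast_ne_zero.mpr ((hmem v).mp hv)
        rw [hw, hu]
        field_simp
      rw [Finset.sum_congr rfl this]
      refine le_trans (Finset.sum_le_sum_of_subset_of_nonneg (Finset.subset_univ _)
        (fun v _ _ => hθ0 v)) hθ1
    have hprod1 : ∏ v ∈ s, u v ^ c v ≤ 1 := by
      have hpt : ∀ v ∈ s, u v ^ c v = (u v ^ w v) ^ N := by
        intro v hv
        rw [← Real.rpow_natCast (u v ^ w v) N, ← Real.rpow_mul (hu0 v),
          hw]
        rw [div_mul_cancel₀ _ hN0, Real.rpow_natCast]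
      rw [Finset.prod_congr rfl hpt, Finset.prod_pow]
      exact pow_le_one₀ (Finset.prod_nonneg fun v _ => Real.rpow_nonneg (hu0 v) _) hAM
    rw [← e1 θ, ← e1 (fun v => (c v : ℝ) / N)]
    have hsplit : ∀ v ∈ s, θ v ^ c v = u v ^ c v * ((c v : ℝ) / N) ^ c v := by
      intro v hv
      rw [← mul_pow]
      congr 1
      have hcv : (c v : ℝ) ≠ 0 := Nat.cast_ne_zero.mpr ((hmem v).mp hv)
      rw [hu]
      field_simp
    rw [Finset.prod_congr rfl hsplit, Finset.prod_mul_distrib]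
    calc (∏ v ∈ s, u v ^ c v) * ∏ v ∈ s, ((c v : ℝ) / N) ^ c v
        ≤ 1 * ∏ v ∈ s, ((c v : ℝ) / N) ^ c v := by
          apply mul_le_mul_of_nonneg_right hprod1
          exact Finset.prod_nonneg fun v _ =>
            pow_nonneg (div_nonneg (Nat.cast_nonneg _) (Nat.cast_nonneg _)) _
      _ = _ := one_mul _

private lemma regret_eq (k n : ℕ) :
    regret k n = ∑ h ∈ piAntidiag (univ : Finset (Fin k)) n,
      (Nat.multinomial Finset.univ h : ℝ) * ∏ v, ((h v : ℝ) / (n : ℝ)) ^ (h v) := by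
  rw [regret, ← Finset.piAntidiag_univ_fin_eq_antidiagonalTuple]

private lemma Q_le (n m : ℕ) (a b : Fin k → ℕ) (ha : ∑ v, a v = n) (hb : ∑ v, b v = m) :
    ∏ v, (((a v + b v : ℕ) : ℝ) / ((n + m : ℕ) : ℝ)) ^ (a v + b v)
      ≤ (∏ v, ((a v : ℝ) / (n : ℝ)) ^ (a v)) * ∏ v, ((b v : ℝ) / (m : ℝ)) ^ (b v) := by
  set θ : Fin k → ℝ := fun v => ((a v + b v : ℕ) : ℝ) / ((n + m : ℕ) : ℝ) with hθ
  have hθ0 : ∀ v, 0 ≤ θ v := fun v => div_nonneg (Nat.cast_nonneg _) (Nat.cast_nonneg _)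
  have hθ1 : ∑ v, θ v ≤ 1 := by
    rw [hθ, ← Finset.sum_div]
    have : ∑ v, ((a v + b v : ℕ) : ℝ) = ((n + m : ℕ) : ℝ) := by
      rw [← Nat.cast_sum]
      congr 1
      rw [Finset.sum_add_distrib, ha, hb]
    rw [this]
    exact div_self_le_one _
  have h1 : ∏ v, θ v ^ a v ≤ ∏ v, ((a v : ℝ) / (n : ℝ)) ^ a v := ml_ineq a ha θ hθ0 hθ1
  have h2 : ∏ v, θ v ^ b v ≤ ∏ v, ((b v : ℝ) / (m : ℝ)) ^ b v := ml_ineq b hb θ hθ0 hθ1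
  calc ∏ v, θ v ^ (a v + b v) = (∏ v, θ v ^ a v) * ∏ v, θ v ^ b v := by
        rw [← Finset.prod_mul_distrib]
        exact Finset.prod_congr rfl fun v _ => pow_add _ _ _
    _ ≤ _ := mul_le_mul h1 h2 (Finset.prod_nonneg fun v _ => pow_nonneg (hθ0 v) _)
        (Finset.prod_nonneg fun v _ =>
          pow_nonneg (div_nonneg (Nat.cast_nonneg _) (Nat.cast_nonneg _)) _)

private lemma regret_submul (k n m : ℕ) :
    regret k (n + m) ≤ regret k n * regret k m := by
  rw [regret_eq, regret_eq, regret_eq, Finset.sum_mul_sum]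
  have key : ∀ h ∈ piAntidiag (univ : Finset (Fin k)) (n + m),
      (Nat.multinomial univ h : ℝ) * ∏ v, ((h v : ℝ) / ((n + m : ℕ) : ℝ)) ^ (h v)
      ≤ ∑ p ∈ (piAntidiag (univ : Finset (Fin k)) n ×ˢ
            piAntidiag (univ : Finset (Fin k)) m).filter (fun p => p.1 + p.2 = h),
          (Nat.multinomial univ p.1 : ℝ) * (∏ v, ((p.1 v : ℝ) / (n : ℝ)) ^ (p.1 v)) *
          ((Nat.multinomial univ p.2 : ℝ) * ∏ v, ((p.2 v : ℝ) / (m : ℝ)) ^ (p.2 v)) := by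
    intro h hh
    have hsum : ∑ v, h v = n + m := by
      simpa [mem_piAntidiag] using hh
    rw [show (Nat.multinomial (univ : Finset (Fin k)) h : ℝ)
        = ((∑ p ∈ (piAntidiag (univ : Finset (Fin k)) n ×ˢ
            piAntidiag (univ : Finset (Fin k)) m).filter (fun p => p.1 + p.2 = h),
          Nat.multinomial univ p.1 * Nat.multinomial univ p.2 : ℕ) : ℝ) from by
        rw [← multinomial_vandermonde n m h hsum]]
    rw [Nat.cast_sum, Finset.sum_mul]
    apply Finset.sum_le_sum
    intro p hp
    obtain ⟨hpmem, hpeq⟩ := Finset.mem_filter.mp hp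
    obtain ⟨hpa, hpb⟩ := Finset.mem_product.mp hpmem
    have ha : ∑ v, p.1 v = n := by simpa [mem_piAntidiag] using hpa
    have hb : ∑ v, p.2 v = m := by simpa [mem_piAntidiag] using hpb
    subst hpeq
    have hQ := Q_le n m p.1 p.2 ha hb
    simp only [Pi.add_apply, Nat.cast_mul]
    calc (Nat.multinomial univ p.1 : ℝ) * (Nat.multinomial univ p.2 : ℝ) *
          ∏ v, (((p.1 v + p.2 v : ℕ) : ℝ) / ((n + m : ℕ) : ℝ)) ^ (p.1 v + p.2 v)
        ≤ (Nat.multinomial univ p.1 : ℝ) * (Nat.multinomial univ p.2 : ℝ) *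
          ((∏ v, ((p.1 v : ℝ) / (n : ℝ)) ^ (p.1 v)) *
            ∏ v, ((p.2 v : ℝ) / (m : ℝ)) ^ (p.2 v)) := by
          apply mul_le_mul_of_nonneg_left hQ
          positivity
      _ = _ := by ring
  calc ∑ h ∈ piAntidiag (univ : Finset (Fin k)) (n + m),
        (Nat.multinomial univ h : ℝ) * ∏ v, ((h v : ℝ) / ((n + m : ℕ) : ℝ)) ^ (h v)
      ≤ ∑ h ∈ piAntidiag (univ : Finset (Fin k)) (n + m),
        ∑ p ∈ (piAntidiag (univ : Finset (Fin k)) n ×ˢ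
            piAntidiag (univ : Finset (Fin k)) m).filter (fun p => p.1 + p.2 = h),
          (Nat.multinomial univ p.1 : ℝ) * (∏ v, ((p.1 v : ℝ) / (n : ℝ)) ^ (p.1 v)) *
          ((Nat.multinomial univ p.2 : ℝ) * ∏ v, ((p.2 v : ℝ) / (m : ℝ)) ^ (p.2 v)) := by
        exact Finset.sum_le_sum key
    _ = ∑ p ∈ piAntidiag (univ : Finset (Fin k)) n ×ˢ piAntidiag (univ : Finset (Fin k)) m,
          (Nat.multinomial univ p.1 : ℝ) * (∏ v, ((p.1 v : ℝ) / (n : ℝ)) ^ (p.1 v)) *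
          ((Nat.multinomial univ p.2 : ℝ) * ∏ v, ((p.2 v : ℝ) / (m : ℝ)) ^ (p.2 v)) := by
        apply Finset.sum_fiberwise_of_maps_to
        intro p hp
        obtain ⟨hpa, hpb⟩ := Finset.mem_product.mp hp
        have ha : ∑ v, p.1 v = n := by simpa [mem_piAntidiag] using hpa
        have hb : ∑ v, p.2 v = m := by simpa [mem_piAntidiag] using hpb
        simp only [mem_piAntidiag, Pi.add_apply]
        constructor
        · rw [Finset.sum_add_distrib, ha, hb]
        · intro i _; exact Finset.mem_univ i
    _ = _ := by rw [Finset.sum_product]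

private lemma regret_pos (k : ℕ) (hk : 1 ≤ k) (n : ℕ) : 0 < regret k n := by
  rw [regret_eq]
  have i0 : Fin k := ⟨0, hk⟩
  apply Finset.sum_pos'
  · intro h _
    positivity
  · refine ⟨fun j => if j = i0 then n else 0, ?_, ?_⟩
    · simp [mem_piAntidiag, Finset.sum_ite_eq']
    · apply mul_pos
      · exact_mod_cast Nat.multinomial_pos _ _
      · apply Finset.prod_pos
        intro v _
        beta_reduce
        split_ifs with hv
        · rcases Nat.eq_zero_or_pos n with hn | hn
          · simp [hn]
          · rw [div_self (Nat.cast_ne_zero.mpr hn.ne'), one_pow]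
            exact one_pos
        · simp

private lemma regret_zero (k : ℕ) : regret k 0 = 1 := by
  rw [regret_eq, piAntidiag_zero]
  simp [Nat.multinomial]

private lemma log_regret_sum_le {Y : Type*} [Fintype Y] (k : ℕ) (hk : 1 ≤ k) (f : Y → ℕ) :
    Real.log (regret k (∑ w, f w)) ≤ ∑ w, Real.log (regret k (f w)) := by
  classical
  have H : ∀ s : Finset Y,
      Real.log (regret k (∑ w ∈ s, f w)) ≤ ∑ w ∈ s, Real.log (regret k (f w)) := by
    intro s
    induction s using Finset.induction_on with
    | empty => simp [regret_zero]
    | @insert a s ha ih =>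
      rw [Finset.sum_insert ha, Finset.sum_insert ha]
      calc Real.log (regret k (f a + ∑ w ∈ s, f w))
          ≤ Real.log (regret k (f a) * regret k (∑ w ∈ s, f w)) :=
            Real.log_le_log (regret_pos k hk _) (regret_submul k _ _)
        _ = Real.log (regret k (f a)) + Real.log (regret k (∑ w ∈ s, f w)) :=
            Real.log_mul (ne_of_gt (regret_pos k hk _)) (ne_of_gt (regret_pos k hk _))
        _ ≤ _ := by linarith
  exact H univ

end Aux

/-- Proposition 1: the conditional regret term is monotone w.r.t. enlarging the
conditioning set: `Δ_k(z) ≤ Δ_k(⟨z, y⟩)`. -/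
theorem condRegret_mono (k : ℕ) (hk : 2 ≤ k) (Z Y : Type*)
    [Fintype Z] [Fintype Y] [DecidableEq Z] [DecidableEq Y]
    (n : ℕ) (hn : 1 ≤ n) (z : Fin n → Z) (y : Fin n → Y) :
    condRegret k z ≤ condRegret k (fun i => (z i, y i)) := by
  classical
  have hk1 : 1 ≤ k := by omega
  unfold condRegret
  rw [Fintype.sum_prod_type]
  apply Finset.sum_le_sum
  intro v _
  have hcard : (Finset.univ.filter (fun i => z i = v)).card
      = ∑ w : Y, (Finset.univ.filter (fun i => (z i, y i) = (v, w))).card := by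
    rw [Finset.card_eq_sum_card_fiberwise (f := y) (t := univ) (fun x _ => Finset.mem_univ _)]
    refine Finset.sum_congr rfl fun w _ => ?_
    congr 1
    rw [Finset.filter_filter]
    apply Finset.filter_congr
    intro i _
    simp [Prod.ext_iff]
  rw [hcard]
  exact le_trans (log_regret_sum_le k hk1 _) (le_of_eq rfl)
end

section
/- If the empirical conditional mutual information vanishes, then the stochastic-complexity-based independence measure is nonpositive (Lemma 2, forward direction): let X, Y, Z be finite nonempty types, n ≥ 1, and x : Fin n → X, y : Fin n → Y, z : Fin n → Z data samples. If the empirical conditional mutual information satisfies Ĥ(x | z) − Ĥ(x | ⟨z, y⟩) = 0 and Ĥ(y | z) − Ĥ(y | ⟨z, x⟩) = 0, then SCI(x; y | z) ≤ 0. -/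
open Finset

/-- The unnormalized empirical conditional entropy `n·Ĥ(a | w) =
∑_{v} ∑_{u} N(u, v) · log(N(v) / N(u, v))`, where `N(u, v)` counts samples with
`a i = u` and `w i = v`, `N(v)` those with `w i = v`, and terms with
`N(u, v) = 0` vanish. -/
noncomputable def condEntN {n : ℕ} {A W : Type*}
    [Fintype A] [Fintype W] [DecidableEq A] [DecidableEq W]
    (a : Fin n → A) (w : Fin n → W) : ℝ :=
  ∑ v : W, ∑ u : A,
    ((Finset.univ.filter (fun i => a i = u ∧ w i = v)).card : ℝ) *
      Real.log (((Finset.univ.filter (fun i => w i = v)).card : ℝ) /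
        ((Finset.univ.filter (fun i => a i = u ∧ w i = v)).card : ℝ))

/-- The asymmetric stochastic-complexity score
`I_SC(x; y | z) = n·(Ĥ(x | z) − Ĥ(x | ⟨z, y⟩)) + Δ_{|X|}(z) − Δ_{|X|}(⟨z, y⟩)`. -/
noncomputable def ISC {n : ℕ} {X Y Z : Type*}
    [Fintype X] [Fintype Y] [Fintype Z] [DecidableEq X] [DecidableEq Y] [DecidableEq Z]
    (x : Fin n → X) (y : Fin n → Y) (z : Fin n → Z) : ℝ :=
  (condEntN x z - condEntN x (fun i => (z i, y i)))
    + condRegret (Fintype.card X) z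
    - condRegret (Fintype.card X) (fun i => (z i, y i))

/-- The stochastic complexity based independence measure
`SCI(x; y | z) = max(I_SC(x; y | z), I_SC(y; x | z))`. -/
noncomputable def SCI {n : ℕ} {X Y Z : Type*}
    [Fintype X] [Fintype Y] [Fintype Z] [DecidableEq X] [DecidableEq Y] [DecidableEq Z]
    (x : Fin n → X) (y : Fin n → Y) (z : Fin n → Z) : ℝ :=
  max (ISC x y z) (ISC y x z)

/-! Once the entropy terms vanish, `I_SC(x; y | z) = Δ(z) − Δ(⟨z, y⟩)`, and refining the
partition by `y` can only increase `Δ` because the regret is at least `1` and submultiplicative: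
`R(L, a + b) ≤ R(L, a) · R(L, b)`. By the multinomial theorem, `R(L, n)` is the sum over all
samples `f : Fin n → Fin L` of their maximized likelihood. The maximum-likelihood distribution of
a sample of size `a + b` is a candidate distribution for each of its two halves, so by Gibbs'
inequality the maximized likelihood of the whole is at most the product of those of the halves. -/

section SampleCount

variable {A : Type*} [DecidableEq A] {n : ℕ}

def sampleCount (f : Fin n → A) (v : A) : ℕ := #{i | f i = v}

lemma sampleCount_eq_sum_sampleCount_pair {U : Type*} [Fintype U] [DecidableEq U]
    (w : Fin n → A) (u : Fin n → U) (v : A) :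
    sampleCount w v = ∑ t, sampleCount (fun i => (w i, u i)) (v, t) := by
  rw [sampleCount, card_eq_sum_card_fiberwise (f := u) (t := univ) (fun _ _ => mem_univ _)]
  simp only [sampleCount, filter_filter, Prod.mk.injEq]

variable [Fintype A]

lemma sum_sampleCount (f : Fin n → A) : ∑ v, sampleCount f v = n := by
  simp only [sampleCount]
  rw [← card_eq_sum_card_fiberwise (fun _ _ => mem_univ _), card_univ, Fintype.card_fin]

lemma sampleCount_mem_piAntidiag (f : Fin n → A) : sampleCount f ∈ piAntidiag univ n := by
  simp [sum_sampleCount]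

lemma prod_comp_eq_prod_pow_sampleCount {M : Type*} [CommMonoid M] (f : Fin n → A) (g : A → M) :
    ∏ i, g (f i) = ∏ v, g v ^ sampleCount f v := by
  rw [← prod_fiberwise' univ f g]
  simp only [prod_const, sampleCount]

lemma card_filter_sampleCount_eq {h : A → ℕ} (hh : h ∈ piAntidiag univ n) :
    #{f : Fin n → A | sampleCount f = h} = Nat.multinomial univ h := by
  -- both sides are the coefficient of `∏ v, X v ^ h v` in `(∑ v, X v) ^ n`, expanded once as a
  -- sum over words `f : Fin n → A` and once by the multinomial theorem
  set D := Finsupp.equivFunOnFinite.symm h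
  have hD : D.sum (fun _ m => m) = n := by
    rw [Finsupp.sum_fintype _ _ (fun _ => rfl)]; exact (mem_piAntidiag.1 hh).1
  have key := MvPolynomial.coeff_sum_X_pow_of_fintype (R := ℕ) D n
  rw [if_pos hD, ← Finsupp.multinomial_of_support_subset (subset_univ _), Fintype.sum_pow,
    MvPolynomial.coeff_sum] at key
  simp_rw [prod_comp_eq_prod_pow_sampleCount, MvPolynomial.coeff_prod_X_pow] at key
  rw [Nat.cast_id, Finsupp.coe_equivFunOnFinite_symm] at key
  rw [← key, card_filter]
  refine sum_congr rfl fun f _ => ?_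
  simp [D, Finsupp.ext_iff, funext_iff, eq_comm]

end SampleCount

lemma sum_comp_sampleCount {A M : Type*} [Fintype A] [DecidableEq A] [AddCommMonoid M]
    (n : ℕ) (g : (A → ℕ) → M) :
    ∑ f : Fin n → A, g (sampleCount f) =
      ∑ h ∈ piAntidiag univ n, Nat.multinomial univ h • g h := by
  rw [← sum_fiberwise_of_maps_to (fun f _ => sampleCount_mem_piAntidiag f)]
  refine sum_congr rfl fun h hh => ?_
  rw [sum_congr rfl fun f hf => congrArg g (mem_filter.1 hf).2, sum_const,
    card_filter_sampleCount_eq hh]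

lemma prod_pow_le_prod_div_pow {A : Type*} [Fintype A] (c : A → ℕ) {m : ℕ}
    (hm : ∑ v, c v = m) (θ : A → ℝ) (hθ₀ : ∀ v, 0 ≤ θ v) (hθ₁ : ∑ v, θ v ≤ 1) :
    ∏ v, θ v ^ c v ≤ ∏ v, ((c v : ℝ) / m) ^ c v := by
  rcases Nat.eq_zero_or_pos m with rfl | hm₀
  · simp [sum_eq_zero_iff.1 hm]
  have hmR : (0 : ℝ) < m := by exact_mod_cast hm₀
  -- `z v = θ v / (c v / m)`, with the junk value `z v = 0` when `c v = 0`, where its weight is `0`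
  set z : A → ℝ := fun v => θ v * m / c v
  have hz₀ : ∀ v, 0 ≤ z v := fun v => by have := hθ₀ v; positivity
  have hz : ∀ v, c v ≠ 0 → (c v : ℝ) / m * z v = θ v := fun v hc => by
    have : (c v : ℝ) ≠ 0 := by exact_mod_cast hc
    simp only [z]
    field_simp
  have hwz : ∀ v, (c v : ℝ) / m * z v ≤ θ v := fun v => by
    rcases eq_or_ne (c v) 0 with hc | hc
    · simp [hc, hθ₀ v]
    · exact (hz v hc).le
  have amgm : ∏ v, z v ^ ((c v : ℝ) / m) ≤ 1 := calc
    _ ≤ ∑ v, (c v : ℝ) / m * z v :=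
      Real.geom_mean_le_arith_mean_weighted univ _ _ (fun v _ => by positivity)
        (by rw [← sum_div, ← Nat.cast_sum, hm, div_self hmR.ne']) (fun v _ => hz₀ v)
    _ ≤ 1 := (sum_le_sum fun v _ => hwz v).trans hθ₁
  have hsplit (v : A) : θ v ^ c v = (z v ^ ((c v : ℝ) / m)) ^ m * ((c v : ℝ) / m) ^ c v := by
    rw [← Real.rpow_natCast _ m, ← Real.rpow_mul (hz₀ v), div_mul_cancel₀ _ hmR.ne',
      Real.rpow_natCast, ← mul_pow]
    rcases eq_or_ne (c v) 0 with hc | hc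
    · simp [hc]
    · rw [mul_comm, hz v hc]
  calc ∏ v, θ v ^ c v
        = (∏ v, z v ^ ((c v : ℝ) / m)) ^ m * ∏ v, ((c v : ℝ) / m) ^ c v := by
        simp_rw [hsplit, prod_mul_distrib, prod_pow]
    _ ≤ ∏ v, ((c v : ℝ) / m) ^ c v := by
        refine mul_le_of_le_one_left (by positivity) (pow_le_one₀ ?_ amgm)
        exact prod_nonneg fun v _ => Real.rpow_nonneg (hz₀ v) _

section MaxLikelihood

variable {A : Type*} [DecidableEq A] {n : ℕ}

noncomputable def empirical (f : Fin n → A) (v : A) : ℝ := sampleCount f v / n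

noncomputable def maxLikelihood (f : Fin n → A) : ℝ := ∏ i, empirical f (f i)

lemma empirical_nonneg (f : Fin n → A) (v : A) : 0 ≤ empirical f v := by
  unfold empirical; positivity

lemma maxLikelihood_nonneg (f : Fin n → A) : 0 ≤ maxLikelihood f :=
  prod_nonneg fun _ _ => empirical_nonneg f _

lemma maxLikelihood_const (v : A) : maxLikelihood (fun _ : Fin n => v) = 1 :=
  prod_eq_one fun i _ => by
    have : (n : ℝ) ≠ 0 := by exact_mod_cast i.pos.ne'
    simp [empirical, sampleCount, this]

variable [Fintype A]

lemma maxLikelihood_eq_prod_pow (f : Fin n → A) :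
    maxLikelihood f = ∏ v, ((sampleCount f v : ℝ) / n) ^ sampleCount f v :=
  prod_comp_eq_prod_pow_sampleCount f _

lemma sum_empirical_le_one (f : Fin n → A) : ∑ v, empirical f v ≤ 1 := by
  simp only [empirical, ← sum_div, ← Nat.cast_sum, sum_sampleCount]
  exact div_self_le_one _

lemma prod_le_maxLikelihood (f : Fin n → A) (θ : A → ℝ) (hθ₀ : ∀ v, 0 ≤ θ v)
    (hθ₁ : ∑ v, θ v ≤ 1) : ∏ i, θ (f i) ≤ maxLikelihood f := by
  rw [maxLikelihood_eq_prod_pow, prod_comp_eq_prod_pow_sampleCount]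
  exact prod_pow_le_prod_div_pow _ (sum_sampleCount f) θ hθ₀ hθ₁

lemma maxLikelihood_append_le {a b : ℕ} (f : Fin a → A) (g : Fin b → A) :
    maxLikelihood (Fin.append f g) ≤ maxLikelihood f * maxLikelihood g := by
  set θ := empirical (Fin.append f g)
  calc maxLikelihood (Fin.append f g) = (∏ i, θ (f i)) * ∏ i, θ (g i) := by
        simp only [maxLikelihood, Fin.prod_univ_add, Fin.append_left, Fin.append_right, θ]
    _ ≤ maxLikelihood f * maxLikelihood g :=
        mul_le_mul (prod_le_maxLikelihood f θ (empirical_nonneg _) (sum_empirical_le_one _))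
          (prod_le_maxLikelihood g θ (empirical_nonneg _) (sum_empirical_le_one _))
          (prod_nonneg fun _ _ => empirical_nonneg _ _) (maxLikelihood_nonneg f)

end MaxLikelihood

lemma regret_eq_sum_maxLikelihood (L n : ℕ) :
    regret L n = ∑ f : Fin n → Fin L, maxLikelihood f := by
  have htuple : Finset.Nat.antidiagonalTuple L n = piAntidiag univ n := by
    ext h; simp [mem_piAntidiag, Finset.Nat.mem_antidiagonalTuple]
  simp_rw [regret, htuple, maxLikelihood_eq_prod_pow,
    sum_comp_sampleCount n fun h : Fin L → ℕ => ∏ v, ((h v : ℝ) / n) ^ h v, nsmul_eq_mul]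

lemma regret_add_le (L a b : ℕ) : regret L (a + b) ≤ regret L a * regret L b := by
  simp only [regret_eq_sum_maxLikelihood, sum_mul_sum, ← Fintype.sum_prod_type']
  rw [← (Fin.appendEquiv a b).sum_comp]
  exact sum_le_sum fun p _ => maxLikelihood_append_le p.1 p.2

lemma one_le_regret {L : ℕ} (hL : 0 < L) (n : ℕ) : 1 ≤ regret L n := by
  rw [regret_eq_sum_maxLikelihood, ← maxLikelihood_const (n := n) (⟨0, hL⟩ : Fin L)]
  exact single_le_sum (fun f _ => maxLikelihood_nonneg f) (mem_univ _)

lemma log_regret_sum_le_s4 {L : ℕ} (hL : 0 < L) {ι : Type*} (s : Finset ι) (m : ι → ℕ) :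
    Real.log (regret L (∑ i ∈ s, m i)) ≤ ∑ i ∈ s, Real.log (regret L (m i)) := by
  have hpos : ∀ k, 0 < regret L k := fun k => one_pos.trans_le (one_le_regret hL k)
  induction s using Finset.cons_induction with
  | empty => simp [regret_eq_sum_maxLikelihood, maxLikelihood]
  | cons a s ha ih =>
    rw [sum_cons, sum_cons]
    calc Real.log (regret L (m a + ∑ i ∈ s, m i))
        ≤ Real.log (regret L (m a) * regret L (∑ i ∈ s, m i)) :=
          Real.log_le_log (hpos _) (regret_add_le L _ _)
      _ = Real.log (regret L (m a)) + Real.log (regret L (∑ i ∈ s, m i)) :=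
          Real.log_mul (hpos _).ne' (hpos _).ne'
      _ ≤ _ := by gcongr

lemma condRegret_le_condRegret_pair {k : ℕ} (hk : 0 < k) {n : ℕ} {W U : Type*}
    [Fintype W] [DecidableEq W] [Fintype U] [DecidableEq U] (w : Fin n → W) (u : Fin n → U) :
    condRegret k w ≤ condRegret k (fun i => (w i, u i)) := by
  rw [condRegret, condRegret, Fintype.sum_prod_type]
  refine sum_le_sum fun v _ => ?_
  have := log_regret_sum_le_s4 hk univ fun t => sampleCount (fun i => (w i, u i)) (v, t)
  rwa [← sampleCount_eq_sum_sampleCount_pair] at this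

lemma ISC_nonpos_of_condEntN_sub_eq_zero {n : ℕ} {X Y Z : Type*}
    [Fintype X] [Fintype Y] [Fintype Z]
    [DecidableEq X] [DecidableEq Y] [DecidableEq Z] [Nonempty X]
    (x : Fin n → X) (y : Fin n → Y) (z : Fin n → Z)
    (h : condEntN x z - condEntN x (fun i => (z i, y i)) = 0) : ISC x y z ≤ 0 := by
  have := condRegret_le_condRegret_pair (Fintype.card_pos (α := X)) z y
  rw [ISC, h]
  linarith

theorem sci_nonpos_of_indep_general {X Y Z : Type*}
    [Fintype X] [Fintype Y] [Fintype Z] [DecidableEq X] [DecidableEq Y] [DecidableEq Z]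
    [Nonempty X] [Nonempty Y]
    (n : ℕ) (x : Fin n → X) (y : Fin n → Y) (z : Fin n → Z)
    (hx : condEntN x z - condEntN x (fun i => (z i, y i)) = 0)
    (hy : condEntN y z - condEntN y (fun i => (z i, x i)) = 0) :
    SCI x y z ≤ 0 :=
  max_le (ISC_nonpos_of_condEntN_sub_eq_zero x y z hx)
    (ISC_nonpos_of_condEntN_sub_eq_zero y x z hy)

/-- Lemma 2 (forward direction): if the empirical conditional mutual information
vanishes in both directions, i.e. `Ĥ(x | z) − Ĥ(x | ⟨z, y⟩) = 0` and
`Ĥ(y | z) − Ĥ(y | ⟨z, x⟩) = 0`, then `SCI(x; y | z) ≤ 0`. -/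
theorem sci_nonpos_of_indep {X Y Z : Type*}
    [Fintype X] [Fintype Y] [Fintype Z] [DecidableEq X] [DecidableEq Y] [DecidableEq Z]
    [Nonempty X] [Nonempty Y] [Nonempty Z]
    (n : ℕ) (hn : 1 ≤ n) (x : Fin n → X) (y : Fin n → Y) (z : Fin n → Z)
    (hx : condEntN x z - condEntN x (fun i => (z i, y i)) = 0)
    (hy : condEntN y z - condEntN y (fun i => (z i, x i)) = 0) :
    SCI x y z ≤ 0 :=
  sci_nonpos_of_indep_general n x y z hx hy
end
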